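/- For any density matrix ρ on a finite-dimensional Hilbert space, its largest eigenvalue λ satisfies 1 − λ = min over unit vectors ξ of the trace distance D(ρ, |ξ⟩⟨ξ|). -/

import Mathlib

/-!
Diagonalise `ρ = ∑ᵢ λᵢ |vᵢ⟩⟨vᵢ|`. For `ξ = v₀` a top eigenvector, `ρ - |ξ⟩⟨ξ|` is diagonal in the
same basis with eigenvalues `λᵢ - δᵢ₀`, whose absolute values sum to `2 (1 - λ)` because
`∑ λᵢ = 1`. Conversely, for any unit `ξ` the matrix `Δ = ρ - |ξ⟩⟨ξ|` is Hermitian of trace `0`;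
writing `Δ = ∑ νᵢ |wᵢ⟩⟨wᵢ|` and `cᵢ = |⟨wᵢ, ξ⟩|² ∈ [0, 1]` we get
`‖Δ‖₁ = ∑ |νᵢ| ≥ ∑ νᵢ (1 - 2 cᵢ) = tr Δ - 2 ⟨ξ, Δ ξ⟩ = 2 (1 - ⟨ξ, ρ ξ⟩) ≥ 2 (1 - λ)`.
-/

open scoped ComplexOrder

/-- The trace norm (sum of singular values) of a complex matrix. -/
noncomputable def traceNorm {d : ℕ} (X : Matrix (Fin d) (Fin d) ℂ) : ℝ :=
  (((Matrix.posSemidef_conjTranspose_mul_self X).1.eigenvectorUnitary.1 *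
      Matrix.diagonal (((↑) : ℝ → ℂ) ∘ (√·) ∘ (Matrix.posSemidef_conjTranspose_mul_self X).1.eigenvalues) *
      (star (Matrix.posSemidef_conjTranspose_mul_self X).1.eigenvectorUnitary : Matrix (Fin d) (Fin d) ℂ)).trace).re

open Matrix Unitary
open scoped InnerProductSpace MatrixOrder

lemma sum_abs_sub_single_of_sum_eq_one {ι : Type*} [Fintype ι] [DecidableEq ι] {p : ι → ℝ}
    (hp : ∀ i, 0 ≤ p i) (hp1 : ∑ i, p i = 1) (j : ι) :
    ∑ i, |p i - (Pi.single j 1 : ι → ℝ) i| = 2 * (1 - p j) := by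
  have hrest : ∑ i ∈ {j}ᶜ, p i = 1 - p j := by
    rw [← hp1, Fintype.sum_eq_add_sum_compl j]
    ring
  have hpj : p j ≤ 1 := by
    linarith [Finset.sum_nonneg fun i (_ : i ∈ ({j}ᶜ : Finset ι)) => hp i]
  rw [Fintype.sum_eq_add_sum_compl j, Pi.single_eq_same, abs_of_nonpos (by linarith), ← hrest]
  have hoff : ∀ i ∈ ({j}ᶜ : Finset ι), |p i - (Pi.single j 1 : ι → ℝ) i| = p i := fun i hi => by
    rw [Pi.single_eq_of_ne (by simpa using hi), sub_zero, abs_of_nonneg (hp i)]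
  rw [Finset.sum_congr rfl hoff]
  linarith

section
variable {𝕜 : Type*} [RCLike 𝕜] {n : Type*} [Fintype n]

lemma EuclideanSpace.trace_vecMulVec_star (x : EuclideanSpace 𝕜 n) :
    (vecMulVec ⇑x (star ⇑x)).trace = (‖x‖ : 𝕜) ^ 2 := by
  rw [trace_vecMulVec, ← EuclideanSpace.inner_eq_star_dotProduct, inner_self_eq_norm_sq_to_K]

lemma EuclideanSpace.dotProduct_vecMulVec_star_mulVec (x : EuclideanSpace 𝕜 n) :
    star ⇑x ⬝ᵥ vecMulVec ⇑x (star ⇑x) *ᵥ ⇑x = (‖x‖ : 𝕜) ^ 4 := by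
  have hx : star ⇑x ⬝ᵥ ⇑x = (‖x‖ : 𝕜) ^ 2 := by
    rw [dotProduct_comm, ← EuclideanSpace.inner_eq_star_dotProduct, inner_self_eq_norm_sq_to_K]
  rw [vecMulVec_mulVec, dotProduct_smul, hx]
  simp only [MulOpposite.smul_eq_mul_unop, MulOpposite.unop_op]
  ring

variable [DecidableEq n]

lemma Matrix.trace_conjStarAlgAut (U : unitaryGroup n 𝕜) (A : Matrix n n 𝕜) :
    (conjStarAlgAut 𝕜 _ U A).trace = A.trace := by
  rw [conjStarAlgAut_apply, trace_mul_cycle, coe_star_mul_self, one_mul]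

lemma Matrix.cfcAbs_conjStarAlgAut_diagonal (U : unitaryGroup n 𝕜) (μ : n → ℝ) :
    CFC.abs (conjStarAlgAut 𝕜 _ U (diagonal (RCLike.ofReal ∘ μ))) =
      conjStarAlgAut 𝕜 _ U (diagonal (RCLike.ofReal ∘ (|·|) ∘ μ)) := by
  refine CFC.sqrt_unique ?_ ?_
  · rw [← map_star, ← map_mul, ← map_mul, star_eq_conjTranspose, diagonal_conjTranspose,
      diagonal_mul_diagonal, diagonal_mul_diagonal]
    congr 2
    ext i
    simp only [Function.comp_apply, Pi.star_apply, RCLike.star_def, RCLike.conj_ofReal,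
      ← RCLike.ofReal_mul, abs_mul_abs_self]
  · rw [conjStarAlgAut_apply]
    refine star_right_conjugate_nonneg ?_ _
    rw [nonneg_iff_posSemidef, posSemidef_diagonal_iff]
    intro i
    simp

namespace Matrix.IsHermitian

variable {A : Matrix n n 𝕜} (hA : A.IsHermitian)

lemma sub_vecMulVec_eigenvectorBasis (i : n) :
    A - vecMulVec ⇑(hA.eigenvectorBasis i) (star ⇑(hA.eigenvectorBasis i)) =
      conjStarAlgAut 𝕜 _ hA.eigenvectorUnitary
        (diagonal (RCLike.ofReal ∘ (hA.eigenvalues - Pi.single i 1))) := by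
  have hproj : vecMulVec ⇑(hA.eigenvectorBasis i) (star ⇑(hA.eigenvectorBasis i)) =
      conjStarAlgAut 𝕜 _ hA.eigenvectorUnitary (diagonal (Pi.single i 1)) := by
    rw [conjStarAlgAut_apply, diagonal_single, single_eq_single_vecMulVec_single, mul_vecMulVec,
      vecMulVec_mul, eigenvectorUnitary_mulVec, star_eq_conjTranspose, vecMul_conjTranspose,
      ← Pi.single_star, star_one, eigenvectorUnitary_mulVec]
  have hdiag : diagonal (RCLike.ofReal ∘ (hA.eigenvalues - Pi.single i 1)) =
      diagonal (RCLike.ofReal ∘ hA.eigenvalues) - diagonal (Pi.single i 1 : n → 𝕜) := by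
    rw [diagonal_sub]
    congr 1
    ext j
    by_cases h : j = i
    · subst h; simp
    · simp [Pi.single_eq_of_ne h]
  rw [hproj, hdiag, map_sub, ← hA.spectral_theorem]

lemma dotProduct_mulVec_eq_sum (x : EuclideanSpace 𝕜 n) :
    star ⇑x ⬝ᵥ A *ᵥ ⇑x =
      ((∑ i, hA.eigenvalues i * ‖⟪hA.eigenvectorBasis i, x⟫_𝕜‖ ^ 2 : ℝ) : 𝕜) := by
  rw [dotProduct_comm, ← EuclideanSpace.inner_eq_star_dotProduct x (WithLp.toLp 2 (A *ᵥ x)),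
    ← hA.eigenvectorBasis.sum_inner_mul_inner, RCLike.ofReal_sum]
  refine Finset.sum_congr rfl fun i _ => ?_
  have hvi : ⟪hA.eigenvectorBasis i, WithLp.toLp 2 (A *ᵥ x)⟫_𝕜 =
      hA.eigenvalues i * ⟪hA.eigenvectorBasis i, x⟫_𝕜 := by
    have hsymm := isSymmetric_toEuclideanLin_iff.mpr hA (hA.eigenvectorBasis i) x
    simp only [toLpLin_apply] at hsymm
    rw [← hsymm, hA.mulVec_eigenvectorBasis, WithLp.toLp_smul, WithLp.toLp_ofLp,
      RCLike.real_smul_eq_coe_smul (K := 𝕜), inner_smul_left, RCLike.conj_ofReal]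
  rw [hvi, ← inner_conj_symm, mul_left_comm, RCLike.conj_mul]
  push_cast
  ring

lemma re_dotProduct_mulVec_le {c : ℝ} (hc : ∀ i, hA.eigenvalues i ≤ c) (x : EuclideanSpace 𝕜 n) :
    RCLike.re (star ⇑x ⬝ᵥ A *ᵥ ⇑x) ≤ c * ‖x‖ ^ 2 := by
  rw [hA.dotProduct_mulVec_eq_sum, RCLike.ofReal_re, ← hA.eigenvectorBasis.sum_sq_norm_inner_right,
    Finset.mul_sum]
  gcongr with i
  exact hc i

end Matrix.IsHermitian

end

lemma traceNorm_eq_re_trace_cfcAbs {d : ℕ} (X : Matrix (Fin d) (Fin d) ℂ) :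
    traceNorm X = (CFC.abs X).trace.re := by
  have hX := posSemidef_conjTranspose_mul_self X
  rw [CFC.abs, star_eq_conjTranspose, CFC.sqrt_eq_real_sqrt _ hX.nonneg, cfcₙ_eq_cfc,
    hX.1.cfc_eq]
  simp [traceNorm, IsHermitian.cfc, conjStarAlgAut_apply]

lemma traceNorm_conjStarAlgAut_diagonal {d : ℕ} (U : unitaryGroup (Fin d) ℂ) (μ : Fin d → ℝ) :
    traceNorm (conjStarAlgAut ℂ _ U (diagonal (RCLike.ofReal ∘ μ))) = ∑ i, |μ i| := by
  rw [traceNorm_eq_re_trace_cfcAbs, cfcAbs_conjStarAlgAut_diagonal, trace_conjStarAlgAut,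
    trace_diagonal]
  simp

lemma Matrix.IsHermitian.traceNorm_eq_sum_abs_eigenvalues {d : ℕ} {A : Matrix (Fin d) (Fin d) ℂ}
    (hA : A.IsHermitian) : traceNorm A = ∑ i, |hA.eigenvalues i| := by
  conv_lhs => rw [hA.spectral_theorem]
  exact traceNorm_conjStarAlgAut_diagonal _ _

lemma Matrix.IsHermitian.re_trace_sub_two_mul_re_dotProduct_mulVec_le_traceNorm {d : ℕ}
    {A : Matrix (Fin d) (Fin d) ℂ} (hA : A.IsHermitian) {x : EuclideanSpace ℂ (Fin d)}
    (hx : ‖x‖ ≤ 1) :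
    RCLike.re A.trace - 2 * RCLike.re (star ⇑x ⬝ᵥ A *ᵥ ⇑x) ≤ traceNorm A := by
  rw [hA.traceNorm_eq_sum_abs_eigenvalues, hA.trace_eq_sum_eigenvalues,
    hA.dotProduct_mulVec_eq_sum, ← RCLike.ofReal_sum, RCLike.ofReal_re, RCLike.ofReal_re,
    Finset.mul_sum, ← Finset.sum_sub_distrib]
  gcongr with i
  have hc : ‖⟪hA.eigenvectorBasis i, x⟫_ℂ‖ ≤ 1 :=
    calc _ ≤ ‖hA.eigenvectorBasis i‖ * ‖x‖ := norm_inner_le_norm _ _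
      _ ≤ 1 := by rwa [hA.eigenvectorBasis.orthonormal.1 i, one_mul]
  set c := ‖⟪hA.eigenvectorBasis i, x⟫_ℂ‖ ^ 2
  have hc0 : 0 ≤ c := by positivity
  have hc1 : c ≤ 1 := pow_le_one₀ (norm_nonneg _) hc
  rcases abs_cases (hA.eigenvalues i) with ⟨h, _⟩ | ⟨h, _⟩ <;> nlinarith

theorem one_sub_max_eigenvalue_eq_min_trace_distance_to_pure_general
    (d : ℕ) (ρ : Matrix (Fin d) (Fin d) ℂ)
    (hρ : ρ.PosSemidef) (hρ1 : ρ.trace = 1) (lam : ℝ)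
    (hlam : IsGreatest (Set.range hρ.1.eigenvalues) lam) :
    IsLeast
      {x : ℝ | ∃ ξ : EuclideanSpace ℂ (Fin d), ‖ξ‖ = 1 ∧
        x = traceNorm (ρ - Matrix.vecMulVec ξ (star ξ)) / 2}
      (1 - lam) := by
  obtain ⟨i₀, hi₀⟩ := hlam.1
  refine ⟨⟨hρ.1.eigenvectorBasis i₀, hρ.1.eigenvectorBasis.orthonormal.1 i₀, ?_⟩, ?_⟩
  · have hsum : ∑ i, hρ.1.eigenvalues i = 1 := by
      simpa [hρ1] using congrArg RCLike.re hρ.1.trace_eq_sum_eigenvalues.symm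
    rw [hρ.1.sub_vecMulVec_eigenvectorBasis, traceNorm_conjStarAlgAut_diagonal]
    simp only [Pi.sub_apply]
    rw [sum_abs_sub_single_of_sum_eq_one hρ.eigenvalues_nonneg hsum, hi₀]
    ring
  · rintro _ ⟨ξ, hξ, rfl⟩
    have hΔ : (ρ - vecMulVec ⇑ξ (star ⇑ξ)).IsHermitian :=
      hρ.1.sub (posSemidef_vecMulVec_self_star _).1
    have hbound := hΔ.re_trace_sub_two_mul_re_dotProduct_mulVec_le_traceNorm hξ.le
    rw [trace_sub, hρ1, EuclideanSpace.trace_vecMulVec_star, sub_mulVec, dotProduct_sub,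
      EuclideanSpace.dotProduct_vecMulVec_star_mulVec, hξ] at hbound
    have hrayleigh := hρ.1.re_dotProduct_mulVec_le (fun i => hlam.2 ⟨i, rfl⟩) ξ
    rw [hξ] at hrayleigh
    simp only [RCLike.ofReal_one, one_pow, sub_self, map_zero, map_sub, RCLike.one_re,
      mul_one] at hbound hrayleigh
    linarith

theorem one_sub_max_eigenvalue_eq_min_trace_distance_to_pure
    (d : ℕ) (hd : 0 < d) (ρ : Matrix (Fin d) (Fin d) ℂ)
    (hρ : ρ.PosSemidef) (hρ1 : ρ.trace = 1) (lam : ℝ)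
    (hlam : IsGreatest (Set.range hρ.1.eigenvalues) lam) :
    IsLeast
      {x : ℝ | ∃ ξ : EuclideanSpace ℂ (Fin d), ‖ξ‖ = 1 ∧
        x = traceNorm (ρ - Matrix.vecMulVec ξ (star ξ)) / 2}
      (1 - lam) :=
  one_sub_max_eigenvalue_eq_min_trace_distance_to_pure_general d ρ hρ hρ1 lam hlam
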